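/- Revealed-together property (the anti-probing guarantee of Section 3.4.2: once two allegations are known to be equal to each other, they belong to the same collection and are revealed together, if at all). In any execution of the bucketing rules R1–R5, if two allegations a and b belong to the same collection in some reachable configuration, then in every configuration obtained from it by further applications of R1–R5 they still belong to the same collection; consequently, in every such subsequent configuration, a belongs to a revealed collection if and only if b does. -/
import Mathlib


/-- An allegation: a distinct identifier, a metadata value, and a reveal threshold. -/
structure Allegation where
  id : ℕ
  md : ℕ
  thr : ℕ
deriving DecidableEq

/-- A collection: a finite set of allegations, a finite set of occupied buckets,
and a flag indicating whether the collection has been revealed. -/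
structure Collection where
  allegs : Finset Allegation
  buckets : Finset ℕ
  revealed : Bool
deriving DecidableEq

namespace Collection
/-- `Min(A)`: the least occupied bucket. -/
noncomputable def bmin (A : Collection) : ℕ := sInf (A.buckets : Set ℕ)
/-- `Max(A)`: the greatest occupied bucket. -/
noncomputable def bmax (A : Collection) : ℕ := sSup (A.buckets : Set ℕ)
end Collection

/-- A configuration is a finite set of collections. -/
abbrev Config := Finset Collection

/-- The transition rules R1–R5 of the bucketing algorithm. -/
inductive Step : Config → Config → Prop
  /-- R1 (file): a new allegation `a` (with a fresh identifier and threshold `≥ 2`)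
  is added as a fresh unrevealed singleton collection with bucket set `{t_a - 1}`. -/
  | file (C : Config) (a : Allegation)
      (hthr : 2 ≤ a.thr)
      (hfresh : ∀ B ∈ C, ∀ b ∈ B.allegs, b.id ≠ a.id) :
      Step C (insert ⟨{a}, {a.thr - 1}, false⟩ C)
  /-- R2 (copy): if `A` is unrevealed, `Min(A) ≥ 1` and every `a ∈ A` has
  `t_a < Min(A) + |A|`, then `Min(A) - 1` is added to `buckets(A)`. -/
  | copy (C : Config) (A : Collection) (hA : A ∈ C)
      (hrev : A.revealed = false)
      (hmin : 1 ≤ A.bmin)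
      (hthr : ∀ a ∈ A.allegs, a.thr < A.bmin + A.allegs.card) :
      Step C (insert ⟨A.allegs, insert (A.bmin - 1) A.buckets, false⟩ (C.erase A))
  /-- R3 (coalesce): two distinct unrevealed collections with overlapping bucket
  sets and pairwise matching allegations coalesce. -/
  | coalesce (C : Config) (A B : Collection)
      (hA : A ∈ C) (hB : B ∈ C) (hne : A ≠ B)
      (hArev : A.revealed = false) (hBrev : B.revealed = false)
      (hover : (A.buckets ∩ B.buckets).Nonempty)
      (hmatch : ∀ a ∈ A.allegs, ∀ b ∈ B.allegs, a.md = b.md) :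
      Step C (insert ⟨A.allegs ∪ B.allegs, A.buckets ∪ B.buckets, false⟩
        ((C.erase A).erase B))
  /-- R4 (reveal): an unrevealed collection occupying bucket 0 is marked revealed;
  its bucket set becomes `{0, 1, …, |A|}`. -/
  | reveal (C : Config) (A : Collection) (hA : A ∈ C)
      (hrev : A.revealed = false) (h0 : (0 : ℕ) ∈ A.buckets) :
      Step C (insert ⟨A.allegs, Finset.range (A.allegs.card + 1), true⟩ (C.erase A))
  /-- R5 (absorb): a revealed collection absorbs an unrevealed one with overlapping
  bucket set and matching allegations; the result is revealed with bucket set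
  `{0, 1, …, |A ∪ B|}`. -/
  | absorb (C : Config) (A B : Collection)
      (hA : A ∈ C) (hB : B ∈ C)
      (hArev : A.revealed = true) (hBrev : B.revealed = false)
      (hover : (A.buckets ∩ B.buckets).Nonempty)
      (hmatch : ∀ a ∈ A.allegs, ∀ b ∈ B.allegs, a.md = b.md) :
      Step C (insert ⟨A.allegs ∪ B.allegs,
        Finset.range ((A.allegs ∪ B.allegs).card + 1), true⟩
        ((C.erase A).erase B))

/-- A configuration is reachable if it is obtained from the empty configuration
by finitely many applications of R1–R5. -/
def Reachable (C : Config) : Prop := Relation.ReflTransGen Step ∅ C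

/-- A configuration is saturated if none of the rules R2–R5 is applicable. -/
def Saturated (C : Config) : Prop :=
  (¬ ∃ A ∈ C, A.revealed = false ∧ 1 ≤ A.bmin ∧
      ∀ a ∈ A.allegs, a.thr < A.bmin + A.allegs.card) ∧
  (¬ ∃ A ∈ C, ∃ B ∈ C, A ≠ B ∧ A.revealed = false ∧ B.revealed = false ∧
      (A.buckets ∩ B.buckets).Nonempty ∧
      ∀ a ∈ A.allegs, ∀ b ∈ B.allegs, a.md = b.md) ∧
  (¬ ∃ A ∈ C, A.revealed = false ∧ (0 : ℕ) ∈ A.buckets) ∧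
  (¬ ∃ A ∈ C, ∃ B ∈ C, A.revealed = true ∧ B.revealed = false ∧
      (A.buckets ∩ B.buckets).Nonempty ∧
      ∀ a ∈ A.allegs, ∀ b ∈ B.allegs, a.md = b.md)

/-- The set of all allegations filed so far (the union of all collections). -/
def filedAllegs (C : Config) : Finset Allegation := C.sup Collection.allegs


/-- Invariant: any allegation belongs to at most one collection. -/
def SAEInv (C : Config) : Prop :=
  ∀ A ∈ C, ∀ B ∈ C, ∀ x : Allegation, x ∈ A.allegs → x ∈ B.allegs → A = B

lemma inv_step {C D : Config} (h : Step C D) (hC : SAEInv C) : SAEInv D := by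
  cases h with
  | file a hthr hfresh =>
    intro P hP Q hQ x hxP hxQ
    rcases Finset.mem_insert.1 hP with rfl | hP <;>
      rcases Finset.mem_insert.1 hQ with rfl | hQ
    · rfl
    · simp only [Finset.mem_singleton] at hxP
      exact absurd rfl (hxP ▸ hfresh Q hQ x hxQ)
    · simp only [Finset.mem_singleton] at hxQ
      exact absurd rfl (hxQ ▸ hfresh P hP x hxP)
    · exact hC P hP Q hQ x hxP hxQ
  | copy A hA hrev hmin hthr =>
    intro P hP Q hQ x hxP hxQ
    rcases Finset.mem_insert.1 hP with rfl | hP <;>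
      rcases Finset.mem_insert.1 hQ with rfl | hQ
    · rfl
    · obtain ⟨hQne, hQC⟩ := Finset.mem_erase.1 hQ
      exact absurd (hC A hA Q hQC x hxP hxQ).symm hQne
    · obtain ⟨hPne, hPC⟩ := Finset.mem_erase.1 hP
      exact absurd (hC A hA P hPC x hxQ hxP).symm hPne
    · exact hC P (Finset.mem_of_mem_erase hP) Q (Finset.mem_of_mem_erase hQ) x hxP hxQ
  | coalesce A B hA hB hne hArev hBrev hover hmatch =>
    intro P hP Q hQ x hxP hxQ
    rcases Finset.mem_insert.1 hP with rfl | hP <;>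
      rcases Finset.mem_insert.1 hQ with rfl | hQ
    · rfl
    · obtain ⟨hQB, hQA, hQC⟩ := Finset.mem_erase.1 hQ |>.imp id (fun h => Finset.mem_erase.1 h)
      rcases Finset.mem_union.1 hxP with hx | hx
      · exact absurd (hC A hA Q hQC x hx hxQ).symm hQA
      · exact absurd (hC B hB Q hQC x hx hxQ).symm hQB
    · obtain ⟨hPB, hPA, hPC⟩ := Finset.mem_erase.1 hP |>.imp id (fun h => Finset.mem_erase.1 h)
      rcases Finset.mem_union.1 hxQ with hx | hx
      · exact absurd (hC A hA P hPC x hx hxP).symm hPA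
      · exact absurd (hC B hB P hPC x hx hxP).symm hPB
    · exact hC P (Finset.mem_of_mem_erase (Finset.mem_of_mem_erase hP))
        Q (Finset.mem_of_mem_erase (Finset.mem_of_mem_erase hQ)) x hxP hxQ
  | reveal A hA hrev h0 =>
    intro P hP Q hQ x hxP hxQ
    rcases Finset.mem_insert.1 hP with rfl | hP <;>
      rcases Finset.mem_insert.1 hQ with rfl | hQ
    · rfl
    · obtain ⟨hQne, hQC⟩ := Finset.mem_erase.1 hQ
      exact absurd (hC A hA Q hQC x hxP hxQ).symm hQne
    · obtain ⟨hPne, hPC⟩ := Finset.mem_erase.1 hP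
      exact absurd (hC A hA P hPC x hxQ hxP).symm hPne
    · exact hC P (Finset.mem_of_mem_erase hP) Q (Finset.mem_of_mem_erase hQ) x hxP hxQ
  | absorb A B hA hB hArev hBrev hover hmatch =>
    intro P hP Q hQ x hxP hxQ
    rcases Finset.mem_insert.1 hP with rfl | hP <;>
      rcases Finset.mem_insert.1 hQ with rfl | hQ
    · rfl
    · obtain ⟨hQB, hQA, hQC⟩ := Finset.mem_erase.1 hQ |>.imp id (fun h => Finset.mem_erase.1 h)
      rcases Finset.mem_union.1 hxP with hx | hx
      · exact absurd (hC A hA Q hQC x hx hxQ).symm hQA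
      · exact absurd (hC B hB Q hQC x hx hxQ).symm hQB
    · obtain ⟨hPB, hPA, hPC⟩ := Finset.mem_erase.1 hP |>.imp id (fun h => Finset.mem_erase.1 h)
      rcases Finset.mem_union.1 hxQ with hx | hx
      · exact absurd (hC A hA P hPC x hx hxP).symm hPA
      · exact absurd (hC B hB P hPC x hx hxP).symm hPB
    · exact hC P (Finset.mem_of_mem_erase (Finset.mem_of_mem_erase hP))
        Q (Finset.mem_of_mem_erase (Finset.mem_of_mem_erase hQ)) x hxP hxQ

lemma inv_of_reachable {C : Config} (h : Reachable C) : SAEInv C := by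
  induction h with
  | refl => intro A hA; simp at hA
  | tail _ hstep ih => exact inv_step hstep ih

lemma step_together {C D : Config} (h : Step C D) {a b : Allegation} {A : Collection}
    (hA : A ∈ C) (ha : a ∈ A.allegs) (hb : b ∈ A.allegs) :
    ∃ B ∈ D, a ∈ B.allegs ∧ b ∈ B.allegs := by
  cases h with
  | file c hthr hfresh =>
    exact ⟨A, Finset.mem_insert_of_mem hA, ha, hb⟩
  | copy A0 hA0 hrev hmin hthr =>
    by_cases hAA : A = A0
    · subst hAA
      exact ⟨_, Finset.mem_insert_self _ _, ha, hb⟩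
    · exact ⟨A, Finset.mem_insert_of_mem (Finset.mem_erase.2 ⟨hAA, hA⟩), ha, hb⟩
  | coalesce A0 B0 hA0 hB0 hne hArev hBrev hover hmatch =>
    by_cases hAA : A = A0
    · subst hAA
      exact ⟨_, Finset.mem_insert_self _ _,
        Finset.mem_union_left _ ha, Finset.mem_union_left _ hb⟩
    · by_cases hAB : A = B0
      · subst hAB
        exact ⟨_, Finset.mem_insert_self _ _,
          Finset.mem_union_right _ ha, Finset.mem_union_right _ hb⟩
      · exact ⟨A, Finset.mem_insert_of_mem
          (Finset.mem_erase.2 ⟨hAB, Finset.mem_erase.2 ⟨hAA, hA⟩⟩), ha, hb⟩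
  | reveal A0 hA0 hrev h0 =>
    by_cases hAA : A = A0
    · subst hAA
      exact ⟨_, Finset.mem_insert_self _ _, ha, hb⟩
    · exact ⟨A, Finset.mem_insert_of_mem (Finset.mem_erase.2 ⟨hAA, hA⟩), ha, hb⟩
  | absorb A0 B0 hA0 hB0 hArev hBrev hover hmatch =>
    by_cases hAA : A = A0
    · subst hAA
      exact ⟨_, Finset.mem_insert_self _ _,
        Finset.mem_union_left _ ha, Finset.mem_union_left _ hb⟩
    · by_cases hAB : A = B0
      · subst hAB
        exact ⟨_, Finset.mem_insert_self _ _,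
          Finset.mem_union_right _ ha, Finset.mem_union_right _ hb⟩
      · exact ⟨A, Finset.mem_insert_of_mem
          (Finset.mem_erase.2 ⟨hAB, Finset.mem_erase.2 ⟨hAA, hA⟩⟩), ha, hb⟩

/-- **Revealed-together property.** If two allegations belong to the same
collection in some reachable configuration, then in every configuration
obtained from it by further applications of R1–R5 they still belong to a
common collection; consequently, in every such subsequent configuration one
of them belongs to a revealed collection iff the other does. -/
theorem revealed_together (C D : Config) (hC : Reachable C)
    (hCD : Relation.ReflTransGen Step C D)
    (a b : Allegation) (A : Collection)
    (hA : A ∈ C) (ha : a ∈ A.allegs) (hb : b ∈ A.allegs) :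
    (∃ B ∈ D, a ∈ B.allegs ∧ b ∈ B.allegs) ∧
    ((∃ B ∈ D, B.revealed = true ∧ a ∈ B.allegs) ↔
      (∃ B ∈ D, B.revealed = true ∧ b ∈ B.allegs)) := by

  have htog : ∃ B ∈ D, a ∈ B.allegs ∧ b ∈ B.allegs := by
    clear hC
    induction hCD with
    | refl => exact ⟨A, hA, ha, hb⟩
    | tail _ hstep ih =>
      obtain ⟨B, hB, haB, hbB⟩ := ih
      exact step_together hstep hB haB hbB
  have hD : SAEInv D := inv_of_reachable (hC.trans hCD)
  obtain ⟨B0, hB0, ha0, hb0⟩ := htog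
  refine ⟨⟨B0, hB0, ha0, hb0⟩, ?_⟩
  constructor
  · rintro ⟨B, hB, hrev, haB⟩
    have hEq : B = B0 := hD B hB B0 hB0 a haB ha0
    exact ⟨B, hB, hrev, by rw [hEq]; exact hb0⟩
  · rintro ⟨B, hB, hrev, hbB⟩
    have hEq : B = B0 := hD B hB B0 hB0 b hbB hb0
    exact ⟨B, hB, hrev, by rw [hEq]; exact ha0⟩
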